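/- L² flattening lemma: let G be a finite group, p a probability distribution on G, and p_U the uniform distribution on G. For every integer k ≥ 1 there exists a probability distribution p_k on G with entropy transport distance D(p, p_k) ≤ k·log 2 and ‖p_k − p_U‖_{ℓ²(G)} ≤ 2^{−k/2}·‖p − p_U‖_{ℓ²(G)}. -/

import Mathlib

open Real
open scoped BigOperators Pointwise Classical

/-- A finitely supported probability space. -/
structure FinProb (Ω : Type*) [Fintype Ω] where
  p : Ω → ℝ
  nonneg : ∀ ω, 0 ≤ p ω
  sum_one : ∑ ω, p ω = 1

/-- Probability that the random variable `X` takes the value `s`. -/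
noncomputable def prob {Ω S : Type*} [Fintype Ω] (μ : FinProb Ω) (X : Ω → S) (s : S) : ℝ :=
  ∑ ω, if X ω = s then μ.p ω else 0

/-- Shannon entropy of a discrete random variable. -/
noncomputable def entropy {Ω S : Type*} [Fintype Ω] (μ : FinProb Ω) (X : Ω → S) : ℝ :=
  ∑ s ∈ Finset.univ.image X, Real.negMulLog (prob μ X s)

/-- Conditional Shannon entropy `H(X|Y) = H(X,Y) - H(Y)`. -/
noncomputable def condEntropy {Ω S T : Type*} [Fintype Ω] (μ : FinProb Ω)
    (X : Ω → S) (Y : Ω → T) : ℝ :=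
  entropy μ (fun ω => (X ω, Y ω)) - entropy μ Y

/-- The essential range of a random variable: values attained with positive probability. -/
noncomputable def rangeF {Ω S : Type*} [Fintype Ω] (μ : FinProb Ω) (X : Ω → S) : Finset S :=
  (Finset.univ.image X).filter (fun s => prob μ X s ≠ 0)

/-- Two random variables (on possibly different spaces) have the same distribution. -/
def IdentDist {Ω Ω' S : Type*} [Fintype Ω] [Fintype Ω'] (μ : FinProb Ω) (X : Ω → S)
    (μ' : FinProb Ω') (Y : Ω' → S) : Prop :=
  ∀ s, prob μ X s = prob μ' Y s

/-- Independence of two random variables. -/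
def IndepRV {Ω S T : Type*} [Fintype Ω] (μ : FinProb Ω) (X : Ω → S) (Y : Ω → T) : Prop :=
  ∀ s t, prob μ (fun ω => (X ω, Y ω)) (s, t) = prob μ X s * prob μ Y t

/-- Joint independence of a finite family of random variables. -/
def IndepFam {Ω ι : Type*} [Fintype Ω] [Fintype ι] {S : ι → Type*}
    (μ : FinProb Ω) (X : ∀ i, Ω → S i) : Prop :=
  ∀ f : ∀ i, S i, prob μ (fun ω i => X i ω) f = ∏ i, prob μ (X i) (f i)

/-- `X` and `Y` are conditionally independent given `W`. -/
def CondIndepGiven {Ω S T U : Type*} [Fintype Ω] (μ : FinProb Ω)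
    (X : Ω → S) (Y : Ω → T) (W : Ω → U) : Prop :=
  ∀ s t u, prob μ (fun ω => (X ω, Y ω, W ω)) (s, t, u) * prob μ W u
    = prob μ (fun ω => (X ω, W ω)) (s, u) * prob μ (fun ω => (Y ω, W ω)) (t, u)

/-- `Y` is determined by `X` (almost surely). -/
def Determines {Ω S T : Type*} [Fintype Ω] (μ : FinProb Ω) (X : Ω → S) (Y : Ω → T) : Prop :=
  ∃ f : S → T, ∀ ω, μ.p ω ≠ 0 → Y ω = f (X ω)

/-- The entropy transport distance between the distributions of `X` and `Y`:
the infimum of `H(Z)` over random variables `Z` (coupled with a copy `X'` of `X`)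
such that `X' + Z` is distributed as `Y`. -/
noncomputable def transDist {Ω₁ Ω₂ G : Type*} [Fintype Ω₁] [Fintype Ω₂] [AddCommGroup G]
    (μ : FinProb Ω₁) (X : Ω₁ → G) (ν : FinProb Ω₂) (Y : Ω₂ → G) : ℝ :=
  sInf {h : ℝ | ∃ (n : ℕ) (μ' : FinProb (Fin n)) (X' Z : Fin n → G),
    IdentDist μ' X' μ X ∧ IdentDist μ' (fun ω => X' ω + Z ω) ν Y ∧ entropy μ' Z = h}

/-- Conditioning a finitely supported probability space on an event `E`
(returning `μ` unchanged if `E` has zero probability). -/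
noncomputable def condFinProb {Ω : Type*} [Fintype Ω] (μ : FinProb Ω) (E : Ω → Prop) :
    FinProb Ω :=
  if h : 0 < ∑ ω, if E ω then μ.p ω else 0 then
    { p := fun ω => if E ω then μ.p ω / (∑ ω', if E ω' then μ.p ω' else 0) else 0
      nonneg := fun ω => by
        split
        · exact div_nonneg (μ.nonneg ω) h.le
        · exact le_refl 0
      sum_one := by
        have h' : ∀ ω, (if E ω then μ.p ω / (∑ ω', if E ω' then μ.p ω' else 0) else 0)
            = (if E ω then μ.p ω else 0) / (∑ ω', if E ω' then μ.p ω' else 0) := by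
          intro ω; split <;> simp
        rw [Finset.sum_congr rfl (fun ω _ => h' ω), ← Finset.sum_div, div_self h.ne'] }
  else μ

/-!
Let `X ∼ p` and let `ε₁, …, ε_k` be independent fair bits. For `f : G → ℝ` of mean zero the
correlations `∑ g, f g * f (g - c)` sum to zero over `c ∈ G`, so some shift `c` has nonpositive
correlation, and averaging `f` with its `c`-translate then at least halves `‖f‖₂²`. Applied `k`
times to `f = p - p_U`, this yields `a₁, …, a_k` such that the law `p_k` of `X + ∑ εᵢ aᵢ` satisfies
`‖p_k - p_U‖₂² ≤ 2⁻ᵏ ‖p - p_U‖₂²`, while `Z = ∑ εᵢ aᵢ` takes at most `2ᵏ` values, so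
`H(Z) ≤ k log 2`.
-/

section Probability

open Finset

variable {Ω S : Type*} [Fintype Ω]

lemma prob_nonneg (μ : FinProb Ω) (X : Ω → S) (s : S) : 0 ≤ prob μ X s :=
  Finset.sum_nonneg fun ω _ => by split <;> simp [μ.nonneg ω]

lemma prob_le_one (μ : FinProb Ω) (X : Ω → S) (s : S) : prob μ X s ≤ 1 :=
  μ.sum_one ▸ Finset.sum_le_sum fun ω _ => by split <;> simp [μ.nonneg ω]

lemma sum_prob_image (μ : FinProb Ω) (X : Ω → S) :
    ∑ s ∈ Finset.univ.image X, prob μ X s = 1 := by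
  rw [← μ.sum_one]
  unfold prob
  rw [Finset.sum_comm]
  simp

lemma sum_prob [Fintype S] (μ : FinProb Ω) (X : Ω → S) : ∑ s, prob μ X s = 1 := by
  rw [← μ.sum_one]
  unfold prob
  rw [Finset.sum_comm]
  simp

lemma prob_id [Fintype S] (μ : FinProb S) (s : S) : prob μ id s = μ.p s := by
  simp [prob]

lemma entropy_nonneg (μ : FinProb Ω) (X : Ω → S) : 0 ≤ entropy μ X :=
  Finset.sum_nonneg fun s _ => Real.negMulLog_nonneg (prob_nonneg μ X s) (prob_le_one μ X s)

namespace FinProb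

lemma nonempty (μ : FinProb Ω) : Nonempty Ω := by
  by_contra h
  rw [not_nonempty_iff] at h
  simpa using μ.sum_one

noncomputable def law [Fintype S] (μ : FinProb Ω) (X : Ω → S) : FinProb S :=
  ⟨prob μ X, prob_nonneg μ X, sum_prob μ X⟩

noncomputable def mapEquiv {Ω' : Type*} [Fintype Ω'] (μ : FinProb Ω) (e : Ω ≃ Ω') :
    FinProb Ω' :=
  ⟨μ.p ∘ e.symm, fun _ => μ.nonneg _, by rw [← μ.sum_one]; exact e.symm.sum_comp μ.p⟩

noncomputable def prodUniform (μ : FinProb Ω) (β : Type*) [Fintype β] [Nonempty β] :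
    FinProb (Ω × β) :=
  ⟨fun x => μ.p x.1 / Fintype.card β, fun _ => div_nonneg (μ.nonneg _) (Nat.cast_nonneg _), by
    simp [Fintype.sum_prod_type, Finset.card_univ, mul_div_cancel₀, μ.sum_one]⟩

end FinProb

lemma prob_mapEquiv {Ω' : Type*} [Fintype Ω'] (μ : FinProb Ω) (e : Ω ≃ Ω') (X : Ω → S)
    (s : S) : prob (μ.mapEquiv e) (X ∘ e.symm) s = prob μ X s :=
  e.symm.sum_comp fun ω => if X ω = s then μ.p ω else 0

lemma entropy_mapEquiv {Ω' : Type*} [Fintype Ω'] (μ : FinProb Ω) (e : Ω ≃ Ω') (X : Ω → S) :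
    entropy (μ.mapEquiv e) (X ∘ e.symm) = entropy μ X := by
  have himage : Finset.univ.image (X ∘ e.symm) = Finset.univ.image X := by
    rw [← Finset.image_image, Finset.image_univ_equiv]
  simp only [entropy, himage, prob_mapEquiv]

lemma entropy_le_log_card_image (μ : FinProb Ω) (X : Ω → S) :
    entropy μ X ≤ Real.log #(Finset.univ.image X) := by
  set T := Finset.univ.image X
  have := μ.nonempty
  have hT : (0 : ℝ) < #T := by simp [T, Finset.card_pos]
  have jensen := Real.concaveOn_negMulLog.le_map_sum (t := T) (w := fun _ => (#T : ℝ)⁻¹)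
    (p := prob μ X) (fun _ _ => by positivity) (by simp [hT.ne'])
    (fun s _ => prob_nonneg μ X s)
  rw [← Finset.smul_sum, ← Finset.smul_sum, sum_prob_image, smul_eq_mul, smul_eq_mul, mul_one,
    Real.negMulLog, Real.log_inv, ← entropy, neg_mul_neg] at jensen
  exact le_of_mul_le_mul_left jensen (inv_pos.mpr hT)

lemma entropy_comp_le_log_card {β : Type*} [Fintype β] (μ : FinProb Ω) (Y : Ω → β)
    (f : β → S) : entropy μ (fun ω => f (Y ω)) ≤ Real.log (Fintype.card β) := by
  refine (entropy_le_log_card_image μ _).trans (Real.log_le_log ?_ ?_)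
  · have := μ.nonempty
    simp [Finset.card_pos]
  · calc (#(Finset.univ.image fun ω => f (Y ω)) : ℝ) ≤ #(Finset.univ.image f) := by
          gcongr
          exact Finset.image_subset_iff.mpr fun ω _ => Finset.mem_image_of_mem f (by simp)
      _ ≤ Fintype.card β := by exact_mod_cast Finset.card_image_le

lemma prob_prodUniform_fst {β : Type*} [Fintype β] [Nonempty β] (μ : FinProb Ω) (X : Ω → S)
    (s : S) : prob (μ.prodUniform β) (fun x => X x.1) s = prob μ X s := by
  unfold prob
  simp [FinProb.prodUniform, Fintype.sum_prod_type, Finset.card_univ, mul_div_cancel₀]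

end Probability

section Transport

variable {Ω Ω₁ Ω₂ G : Type*} [Fintype Ω] [Fintype Ω₁] [Fintype Ω₂] [AddCommGroup G]

/-- `transDist` only ranges over couplings on the spaces `Fin n`; any finite space will do. -/
lemma transDist_le_entropy {μ₁ : FinProb Ω₁} {X₁ : Ω₁ → G} {μ₂ : FinProb Ω₂} {Y₂ : Ω₂ → G}
    (ν : FinProb Ω) (X Z : Ω → G) (hX : IdentDist ν X μ₁ X₁)
    (hY : IdentDist ν (fun ω => X ω + Z ω) μ₂ Y₂) :
    transDist μ₁ X₁ μ₂ Y₂ ≤ entropy ν Z := by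
  set e := Fintype.equivFin Ω
  refine csInf_le ⟨0, ?_⟩ ⟨_, ν.mapEquiv e, X ∘ e.symm, Z ∘ e.symm, fun s => ?_, fun s => ?_,
    entropy_mapEquiv ν e Z⟩
  · rintro _ ⟨n, μ, X', Z', -, -, rfl⟩
    exact entropy_nonneg μ Z'
  · exact (prob_mapEquiv ν e X s).trans (hX s)
  · exact (prob_mapEquiv ν e (fun ω => X ω + Z ω) s).trans (hY s)

end Transport

section Flattening

variable {G : Type*} [AddCommGroup G]

def subsetSum {k : ℕ} (a : Fin k → G) (b : Fin k → Bool) : G :=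
  ∑ i, if b i then a i else 0

lemma subsetSum_cons {k : ℕ} (c : G) (a : Fin k → G) (b₀ : Bool) (b : Fin k → Bool) :
    subsetSum (Fin.cons c a) (Fin.cons b₀ b) = (if b₀ then c else 0) + subsetSum a b := by
  simp [subsetSum, Fin.sum_univ_succ]

variable [Fintype G]

lemma prob_prodUniform_add {β : Type*} [Fintype β] [Nonempty β] (μ : FinProb G) (f : β → G)
    (g : G) :
    prob (μ.prodUniform β) (fun x => x.1 + f x.2) g = (∑ b, μ.p (g - f b)) / Fintype.card β := by
  unfold prob
  simp [FinProb.prodUniform, Fintype.sum_prod_type, Finset.sum_comm (γ := G), ← eq_sub_iff_add_eq,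
    Finset.sum_div]

noncomputable def flatten (p : FinProb G) {k : ℕ} (a : Fin k → G) : FinProb G :=
  (p.prodUniform (Fin k → Bool)).law fun x => x.1 + subsetSum a x.2

lemma flatten_p (p : FinProb G) {k : ℕ} (a : Fin k → G) (g : G) :
    (flatten p a).p g = (∑ b, p.p (g - subsetSum a b)) / 2 ^ k := by
  simp [flatten, FinProb.law, prob_prodUniform_add]

lemma flatten_fin_zero (p : FinProb G) (a : Fin 0 → G) : (flatten p a).p = p.p := by
  ext g
  simp [flatten_p, subsetSum]

lemma flatten_cons_p (p : FinProb G) {k : ℕ} (c : G) (a : Fin k → G) (g : G) :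
    (flatten p (Fin.cons c a)).p g = ((flatten p a).p g + (flatten p a).p (g - c)) / 2 := by
  rw [flatten_p, ← (Fin.consEquiv fun _ => Bool).sum_comp]
  simp only [Fin.consEquiv, Equiv.coe_fn_mk, Fintype.sum_prod_type, Fintype.sum_bool,
    subsetSum_cons, if_true, Bool.false_eq_true, if_false, sub_add_eq_sub_sub, sub_zero,
    flatten_p, pow_succ]
  ring

end Flattening

section L2

variable {G : Type*} [Fintype G] [AddCommGroup G]

lemma exists_sum_mul_shift_nonpos (f : G → ℝ) (hf : ∑ g, f g = 0) :
    ∃ c, ∑ g, f g * f (g - c) ≤ 0 := by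
  have htotal : ∑ c, ∑ g, f g * f (g - c) = 0 := by
    rw [Finset.sum_comm]
    refine Finset.sum_eq_zero fun g _ => ?_
    have hshift : ∑ c, f (g - c) = ∑ c, f c := (Equiv.subLeft g).sum_comp f
    rw [← Finset.mul_sum, hshift, hf, mul_zero]
  obtain ⟨c, -, hc⟩ := Finset.exists_le_of_sum_le Finset.univ_nonempty
    (htotal.trans Finset.sum_const_zero.symm).le
  exact ⟨c, hc⟩

lemma exists_sum_sq_avg_shift_le (f : G → ℝ) (hf : ∑ g, f g = 0) :
    ∃ c, ∑ g, ((f g + f (g - c)) / 2) ^ 2 ≤ (∑ g, f g ^ 2) / 2 := by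
  obtain ⟨c, hc⟩ := exists_sum_mul_shift_nonpos f hf
  refine ⟨c, ?_⟩
  have hshift : ∑ g, f (g - c) ^ 2 = ∑ g, f g ^ 2 := (Equiv.subRight c).sum_comp (f · ^ 2)
  calc ∑ g, ((f g + f (g - c)) / 2) ^ 2
      = (∑ g, f g ^ 2) / 4 + (∑ g, f (g - c) ^ 2) / 4 + (∑ g, f g * f (g - c)) / 2 := by
        simp only [Finset.sum_div, ← Finset.sum_add_distrib]
        exact Finset.sum_congr rfl fun g _ => by ring
    _ ≤ (∑ g, f g ^ 2) / 2 := by linarith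

lemma exists_flatten_sum_sq_le (p : FinProb G) (k : ℕ) :
    ∃ a : Fin k → G, ∑ g, ((flatten p a).p g - (Fintype.card G : ℝ)⁻¹) ^ 2 ≤
      (1 / 2) ^ k * ∑ g, (p.p g - (Fintype.card G : ℝ)⁻¹) ^ 2 := by
  induction k with
  | zero => exact ⟨Fin.elim0, by simp [flatten_fin_zero]⟩
  | succ k ih =>
    obtain ⟨a, ha⟩ := ih
    set f : G → ℝ := fun g => (flatten p a).p g - (Fintype.card G : ℝ)⁻¹
    have hf : ∑ g, f g = 0 := by simp [f, Finset.sum_sub_distrib, (flatten p a).sum_one]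
    obtain ⟨c, hc⟩ := exists_sum_sq_avg_shift_le f hf
    refine ⟨Fin.cons c a, ?_⟩
    calc ∑ g, ((flatten p (Fin.cons c a)).p g - (Fintype.card G : ℝ)⁻¹) ^ 2
        = ∑ g, ((f g + f (g - c)) / 2) ^ 2 := by
          simp only [flatten_cons_p, f]
          exact Finset.sum_congr rfl fun g _ => by ring
      _ ≤ (1 / 2) ^ (k + 1) * ∑ g, (p.p g - (Fintype.card G : ℝ)⁻¹) ^ 2 := by
          rw [pow_succ]
          linarith

end L2

lemma sqrt_half_pow (k : ℕ) : √((1 / 2 : ℝ) ^ k) = (2 : ℝ) ^ (-(k : ℝ) / 2) := by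
  rw [Real.sqrt_eq_rpow, one_div, inv_pow, ← Real.rpow_natCast, ← Real.rpow_neg zero_le_two,
    ← Real.rpow_mul zero_le_two]
  ring_nf

theorem l2_flattening_general {G : Type*} [Fintype G] [AddCommGroup G]
    (p : FinProb G) (k : ℕ) :
    ∃ pk : FinProb G,
      transDist p id pk id ≤ (k : ℝ) * Real.log 2 ∧
      Real.sqrt (∑ x, (pk.p x - ((Fintype.card G : ℝ))⁻¹) ^ 2) ≤
        (2 : ℝ) ^ (-(k : ℝ) / 2) *
          Real.sqrt (∑ x, (p.p x - ((Fintype.card G : ℝ))⁻¹) ^ 2) := by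
  obtain ⟨a, ha⟩ := exists_flatten_sum_sq_le p k
  refine ⟨flatten p a, ?_, ?_⟩
  · calc transDist p id (flatten p a) id
        ≤ entropy (p.prodUniform (Fin k → Bool)) fun x => subsetSum a x.2 :=
          transDist_le_entropy _ (fun x : G × (Fin k → Bool) => x.1) _ (prob_prodUniform_fst p id)
            fun s => (prob_id (flatten p a) s).symm
      _ ≤ Real.log (Fintype.card (Fin k → Bool)) := entropy_comp_le_log_card _ Prod.snd _
      _ = k * Real.log 2 := by simp [Real.log_pow]
  · calc √(∑ x, ((flatten p a).p x - (Fintype.card G : ℝ)⁻¹) ^ 2)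
        ≤ √((1 / 2) ^ k * ∑ x, (p.p x - (Fintype.card G : ℝ)⁻¹) ^ 2) := Real.sqrt_le_sqrt ha
      _ = (2 : ℝ) ^ (-(k : ℝ) / 2) * √(∑ x, (p.p x - (Fintype.card G : ℝ)⁻¹) ^ 2) := by
          rw [Real.sqrt_mul (by positivity), sqrt_half_pow]

/-- L² flattening lemma: for a probability distribution `p` on a finite
group `G` and every `k ≥ 1` there is a distribution `p_k` with transport distance
`D(p, p_k) ≤ k·log 2` and `‖p_k − p_U‖₂ ≤ 2^{−k/2}·‖p − p_U‖₂`, where `p_U` is uniform. -/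
theorem l2_flattening {G : Type*} [Fintype G] [AddCommGroup G]
    (p : FinProb G) (k : ℕ) (hk : 1 ≤ k) :
    ∃ pk : FinProb G,
      transDist p id pk id ≤ (k : ℝ) * Real.log 2 ∧
      Real.sqrt (∑ x, (pk.p x - ((Fintype.card G : ℝ))⁻¹) ^ 2) ≤
        (2 : ℝ) ^ (-(k : ℝ) / 2) *
          Real.sqrt (∑ x, (p.p x - ((Fintype.card G : ℝ))⁻¹) ^ 2) :=
  l2_flattening_general p k
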